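/- If A|B is an H-separable extension with H-separability system {e_i, r_i}, then the centralizer R = C_A(B) is a finitely generated projective module over the center Z of A; indeed r = Σ_i r_i (e_i^1 r e_i^2) for all r ∈ R, and each map r ↦ e_i^1 r e_i^2 lands in Z. -/

import Mathlib

open TensorProduct

noncomputable section

namespace D2

variable (A : Type*) [Ring A] (B : Subring A)

/-- The defining relations of `A ⊗_B A` as a quotient of `A ⊗_ℤ A`. -/
def relSub : Submodule ℤ (A ⊗[ℤ] A) :=
  Submodule.span ℤ {x | ∃ (a c : A) (b : B), x = (a * (b : A)) ⊗ₜ[ℤ] c - a ⊗ₜ[ℤ] ((b : A) * c)}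

/-- The tensor square `A ⊗_B A` of a ring extension `B ⊆ A`. -/
abbrev TensorSq := (A ⊗[ℤ] A) ⧸ relSub A B

/-- The class of a simple tensor `a ⊗_B c`. -/
def tmulB (a c : A) : TensorSq A B := Submodule.Quotient.mk (a ⊗ₜ[ℤ] c)

/-- Left multiplication `a₀ • (x ⊗ y) = (a₀ x) ⊗ y` on `A ⊗_B A`. -/
def lmul (a : A) : TensorSq A B →ₗ[ℤ] TensorSq A B :=
  Submodule.mapQ _ _ (TensorProduct.map (LinearMap.mulLeft ℤ a) LinearMap.id) (by
    rw [relSub, Submodule.span_le]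
    rintro x ⟨a', c, b, rfl⟩
    simp only [SetLike.mem_coe, Submodule.mem_comap, map_sub, TensorProduct.map_tmul,
      LinearMap.mulLeft_apply, LinearMap.id_apply]
    refine Submodule.subset_span ⟨a * a', c, b, ?_⟩
    erw [map_sub, TensorProduct.map_tmul, TensorProduct.map_tmul]
    simp only [LinearMap.mulLeft_apply, LinearMap.id_apply, mul_assoc])

/-- Right multiplication `(x ⊗ y) • a₀ = x ⊗ (y a₀)` on `A ⊗_B A`. -/
def rmul (a : A) : TensorSq A B →ₗ[ℤ] TensorSq A B :=
  Submodule.mapQ _ _ (TensorProduct.map LinearMap.id (LinearMap.mulRight ℤ a)) (by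
    rw [relSub, Submodule.span_le]
    rintro x ⟨a', c, b, rfl⟩
    simp only [SetLike.mem_coe, Submodule.mem_comap, map_sub, TensorProduct.map_tmul,
      LinearMap.mulRight_apply, LinearMap.id_apply]
    refine Submodule.subset_span ⟨a', c * a, b, ?_⟩
    erw [map_sub, TensorProduct.map_tmul, TensorProduct.map_tmul]
    simp only [LinearMap.mulRight_apply, LinearMap.id_apply, mul_assoc])

/-- The multiplication map `A ⊗_B A → A`, `x ⊗ y ↦ x y`. -/
def mulQ : TensorSq A B →ₗ[ℤ] A :=
  Submodule.liftQ _ (LinearMap.mul' ℤ A) (by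
    rw [relSub, Submodule.span_le]
    rintro x ⟨a, c, b, rfl⟩
    simp [LinearMap.mem_ker, mul_assoc]
    erw [LinearMap.mem_ker, map_sub, LinearMap.mul'_apply, LinearMap.mul'_apply]
    simp [mul_assoc])

/-- An element `t` of `A ⊗_B A` is `B`-central when `b t = t b` for all `b ∈ B`. -/
def IsBCentral (t : TensorSq A B) : Prop := ∀ b ∈ B, lmul A B b t = rmul A B b t

/-- An element `t` of `A ⊗_B A` is `A`-central (a Casimir element) when `a t = t a`. -/
def IsACentral (t : TensorSq A B) : Prop := ∀ a : A, lmul A B a t = rmul A B a t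

/-- A `B`-`B`-bimodule endomorphism of `A`. -/
def IsBB (α : A →ₗ[ℤ] A) : Prop :=
  ∀ b ∈ B, ∀ a : A, α ((b : A) * a) = b * α a ∧ α (a * b) = α a * b

/-- A right `B`-module endomorphism of `A`. -/
def IsRightB (f : A →ₗ[ℤ] A) : Prop := ∀ a : A, ∀ b ∈ B, f (a * b) = f a * b

/-- `x ↦ (x·) ⊗ id` as a linear map, used to build Sweedler-type expressions. -/
def lmulTen : A →ₗ[ℤ] (A ⊗[ℤ] A) →ₗ[ℤ] (A ⊗[ℤ] A) where
  toFun a := TensorProduct.map (LinearMap.mulLeft ℤ a) LinearMap.id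
  map_add' a a' := by
    apply TensorProduct.ext'
    intro x y
    simp [add_mul, TensorProduct.add_tmul]
    rfl
  map_smul' z a := by
    apply TensorProduct.ext'
    intro x y
    simp only [TensorProduct.map_tmul, LinearMap.mulLeft_apply, LinearMap.id_apply,
      LinearMap.smul_apply, RingHom.id_apply, smul_mul_assoc, TensorProduct.smul_tmul']
    rfl

/-- For `ζ = Σ u ⊗ v`, the map `a ↦ Σ α(a u) v`, i.e. `α(? ζ¹) ζ²`. -/
def sweed (α : A →ₗ[ℤ] A) (ζ : A ⊗[ℤ] A) : A →ₗ[ℤ] A :=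
  ((LinearMap.mul' ℤ A).comp (TensorProduct.map α LinearMap.id)).comp ((lmulTen A).flip ζ)

/-- For `ζ = Σ u ⊗ v`, the element `Σ u r v` ("sandwich" evaluation `ζ¹ r ζ²`). -/
def sandw (r : A) (ζ : A ⊗[ℤ] A) : A :=
  (LinearMap.mul' ℤ A) ((TensorProduct.map (LinearMap.mulRight ℤ r) LinearMap.id) ζ)

/-- `mul₂ ζ ξ = Σ (u x) ⊗ (y v)` for `ζ = Σ u ⊗ v`, `ξ = Σ x ⊗ y`:
the product `ξ ·_T ζ` of two elements of `T = (A ⊗_B A)^B` on representatives. -/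
def mul₂ : (A ⊗[ℤ] A) →ₗ[ℤ] (A ⊗[ℤ] A) →ₗ[ℤ] (A ⊗[ℤ] A) :=
  TensorProduct.lift <| LinearMap.mk₂ ℤ
    (fun u v => TensorProduct.map (LinearMap.mulLeft ℤ u) (LinearMap.mulRight ℤ v))
    (fun u u' v => by
      apply TensorProduct.ext'
      intro x y
      simp [add_mul, TensorProduct.add_tmul]
      rfl)
    (fun z u v => by
      apply TensorProduct.ext'
      intro x y
      simp only [TensorProduct.map_tmul, LinearMap.mulLeft_apply, LinearMap.mulRight_apply,
        LinearMap.smul_apply, smul_mul_assoc, TensorProduct.smul_tmul']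
      rfl)
    (fun u v v' => by
      apply TensorProduct.ext'
      intro x y
      simp [mul_add, TensorProduct.tmul_add]
      rfl)
    (fun z u v => by
      apply TensorProduct.ext'
      intro x y
      simp only [TensorProduct.map_tmul, LinearMap.mulLeft_apply, LinearMap.mulRight_apply,
        LinearMap.smul_apply, mul_smul_comm, TensorProduct.tmul_smul]
      rfl)

/-- `A` is balanced as a right `B`-module. -/
def RightBalanced : Prop :=
  ∀ φ : A →+ A,
    (∀ f : A →+ A, (∀ a : A, ∀ b ∈ B, f (a * b) = f a * b) → ∀ a, φ (f a) = f (φ a)) →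
    ∃ b ∈ B, ∀ a, φ a = a * b

end D2

end


open TensorProduct in
/-- for an H-separable extension, `R = C_A(B)` is f.g. projective over the
center `Z` of `A`: explicitly `r = Σᵢ rᵢ (eᵢ¹ r eᵢ²)` with each `eᵢ¹ r eᵢ² ∈ Z`. -/
theorem stmt8 {A : Type*} [Ring A] (B : Subring A)
    (n : ℕ) (e : Fin n → A ⊗[ℤ] A) (r : Fin n → A)
    (hce : ∀ i, D2.IsACentral A B (Submodule.Quotient.mk (e i)))
    (hr : ∀ i, r i ∈ Subring.centralizer (B : Set A))
    (hsys : ∑ i, D2.lmul A B (r i) (Submodule.Quotient.mk (e i)) = D2.tmulB A B 1 1) :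
    ∀ x ∈ Subring.centralizer (B : Set A),
      (∀ i, D2.sandw A x (e i) ∈ Subring.center A) ∧
      x = ∑ i, r i * D2.sandw A x (e i) := by
  intro x hx
  set L : A ⊗[ℤ] A →ₗ[ℤ] A :=
    (LinearMap.mul' ℤ A).comp (TensorProduct.map (LinearMap.mulRight ℤ x) LinearMap.id) with hL
  have hsandw : ∀ ζ, D2.sandw A x ζ = L ζ := fun ζ => rfl
  have hLt : ∀ u v : A, L (u ⊗ₜ[ℤ] v) = u * x * v := fun u v => rfl
  have hker : D2.relSub A B ≤ LinearMap.ker L := by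
    rw [D2.relSub, Submodule.span_le]
    rintro t ⟨a, c, b, rfl⟩
    have hb : (b : A) * x = x * b := hx b b.2
    simp only [hLt, SetLike.mem_coe, LinearMap.mem_ker, map_sub, LinearMap.comp_apply,
      TensorProduct.map_tmul, LinearMap.mulRight_apply, LinearMap.id_apply,
      LinearMap.mul'_apply, sub_eq_zero, mul_assoc]
    rw [← mul_assoc (b : A) x c, hb, mul_assoc]
  set Q := Submodule.liftQ (D2.relSub A B) L hker with hQ
  have hmk : ∀ ζ : A ⊗[ℤ] A, Q (Submodule.Quotient.mk ζ) = L ζ := fun _ => rfl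
  have hLl : ∀ (a : A) (ζ : A ⊗[ℤ] A),
      L (TensorProduct.map (LinearMap.mulLeft ℤ a) LinearMap.id ζ) = a * L ζ := by
    intro a ζ
    induction ζ using TensorProduct.induction_on with
    | zero => simp
    | tmul u v =>
        simp [hLt, mul_assoc]
    | add p q hp hq => simp [hp, hq, mul_add]
  have hLr : ∀ (a : A) (ζ : A ⊗[ℤ] A),
      L (TensorProduct.map LinearMap.id (LinearMap.mulRight ℤ a) ζ) = L ζ * a := by
    intro a ζ
    induction ζ using TensorProduct.induction_on with
    | zero => simp
    | tmul u v =>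
        simp [hLt, mul_assoc]
    | add p q hp hq => simp [hp, hq, add_mul]
  have hQl : ∀ (a : A) (ζ : A ⊗[ℤ] A),
      Q (D2.lmul A B a (Submodule.Quotient.mk ζ)) = a * L ζ := by
    intro a ζ
    exact hLl a ζ
  have hQr : ∀ (a : A) (ζ : A ⊗[ℤ] A),
      Q (D2.rmul A B a (Submodule.Quotient.mk ζ)) = L ζ * a := by
    intro a ζ
    exact hLr a ζ
  constructor
  · intro i
    rw [hsandw]
    rw [Subring.mem_center_iff]
    intro a
    have := congrArg Q (hce i a)
    rwa [hQl, hQr] at this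
  · symm
    calc ∑ i, r i * D2.sandw A x (e i)
        = Q (∑ i, D2.lmul A B (r i) (Submodule.Quotient.mk (e i))) := by
          rw [map_sum]
          exact Finset.sum_congr rfl fun i _ => by rw [hsandw, hQl]
      _ = Q (D2.tmulB A B 1 1) := by rw [hsys]
      _ = x := by
          rw [D2.tmulB, hmk]
          simp [hLt]
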